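/- Suppose L and N are cyclic Latin squares of order n and N = L(σ_R, σ_C, σ_E) for some permutations σ_R, σ_C, σ_E ∈ S_n. Then there exist integers 0 ≤ x, j' < n with gcd(x,n) = 1 such that N = L(σ_R, m_x, m_x·τ^{j'}), where m_x(j) = jx mod n and τ(j) = j+1 mod n. -/

import Mathlib

/-- An `n × n` array on `ZMod n` is a Latin square if every row and column is a bijection. -/
def IsLatinSq (n : ℕ) (L : ZMod n → ZMod n → ZMod n) : Prop :=
  (∀ r, Function.Bijective fun c => L r c) ∧ (∀ c, Function.Bijective fun r => L r c)

/-- A Latin square is cyclic if `(r,c,e) ∈ L` implies `(r,c+1,e+1) ∈ L`. -/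
def IsCyclicSq (n : ℕ) (L : ZMod n → ZMod n → ZMod n) : Prop :=
  ∀ r c, L r (c + 1) = L r c + 1

/-!
A cyclic square is determined by its first column: `L r c = L r 0 + c`. Comparing the isotopism
relation at two rows `r` and `0` shows that translating a column by `L r 0 - L 0 0` shifts its
image under `σ_C` by a constant. Since the first column of `L` takes every value, `σ_C` commutes
with translation up to a constant, hence is affine, `σ_C c = σ_C 0 + c x`, and `x` is a unit
because `σ_C` is injective. Reading off the relation in column `0` then gives `j'`.
-/

theorem ZMod.eq_add_mul_of_forall_add_one {n : ℕ} {f : ZMod n → ZMod n} {d : ZMod n}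
    (hf : ∀ c, f (c + 1) = f c + d) (c : ZMod n) : f c = f 0 + c * d := by
  obtain ⟨k, rfl⟩ := ZMod.intCast_surjective c
  induction k using Int.induction_on with
  | zero => simp
  | succ k ih => push_cast at ih ⊢; rw [hf, ih]; ring
  | pred k ih =>
    have hstep := hf ((-k - 1 : ℤ) : ZMod n)
    push_cast at hstep ih ⊢
    rw [sub_add_cancel] at hstep
    linear_combination ih - hstep

theorem ZMod.isUnit_of_injective_add_mul {n : ℕ} [NeZero n] {a x : ZMod n}
    (h : Function.Injective fun c => a + c * x) : IsUnit x := by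
  have hinj : Function.Injective fun c : ZMod n => c * x := fun c d hcd => h (by simp_all)
  obtain ⟨y, hy⟩ := Finite.surjective_of_injective hinj 1
  exact IsUnit.of_mul_eq_one y (by rw [mul_comm]; exact hy)

namespace IsCyclicSq

variable {n : ℕ} {L N : ZMod n → ZMod n → ZMod n}

theorem apply_eq_add (hL : IsCyclicSq n L) (r c : ZMod n) : L r c = L r 0 + c := by
  simpa using ZMod.eq_add_mul_of_forall_add_one (hL r) c

theorem col_map_add_of_isotopic (hL : IsCyclicSq n L) (hN : IsCyclicSq n N)
    {σR σC σE : ZMod n → ZMod n} (hrel : ∀ r c, N (σR r) (σC c) = σE (L r c)) (r c : ZMod n) :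
    σC (L r 0 - L 0 0 + c) = σC c + (N (σR r) 0 - N (σR 0) 0) := by
  have hr := hrel r c
  have h0 := hrel 0 (L r 0 - L 0 0 + c)
  rw [hN.apply_eq_add (σR r), hL.apply_eq_add r c] at hr
  rw [hN.apply_eq_add (σR 0), hL.apply_eq_add 0 (L r 0 - L 0 0 + c)] at h0
  rw [show L 0 0 + (L r 0 - L 0 0 + c) = L r 0 + c by ring, ← hr] at h0
  linear_combination h0

theorem col_map_eq_affine_of_isotopic (hL : IsCyclicSq n L) (hN : IsCyclicSq n N)
    (hsurj : Function.Surjective fun r => L r 0)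
    {σR σC σE : ZMod n → ZMod n} (hrel : ∀ r c, N (σR r) (σC c) = σE (L r c)) (c : ZMod n) :
    σC c = σC 0 + c * (σC 1 - σC 0) := by
  obtain ⟨r, hr⟩ := hsurj (L 0 0 + 1)
  have hshift := col_map_add_of_isotopic hL hN hrel r
  simp only [hr, add_sub_cancel_left] at hshift
  have hone : σC 1 = σC 0 + (N (σR r) 0 - N (σR 0) 0) := by simpa using hshift 0
  refine ZMod.eq_add_mul_of_forall_add_one (fun c => ?_) c
  rw [add_comm c, hshift c, hone]
  ring

end IsCyclicSq

theorem isotopism_of_cyclic_reduces_general (n : ℕ) (hn : 0 < n)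
    (L N : ZMod n → ZMod n → ZMod n)
    (hLatinL : IsLatinSq n L) (hCycL : IsCyclicSq n L)
    (hCycN : IsCyclicSq n N)
    (σR σC σE : Equiv.Perm (ZMod n))
    (hrel : ∀ r c : ZMod n, N (σR r) (σC c) = σE (L r c)) :
    ∃ x j' : ℕ, x < n ∧ j' < n ∧ Nat.Coprime x n ∧
      ∀ r c : ZMod n, N (σR r) ((x : ZMod n) * c) = (x : ZMod n) * L r c + (j' : ZMod n) := by
  have : NeZero n := ⟨hn.ne'⟩
  set x := σC 1 - σC 0
  have hC := hCycL.col_map_eq_affine_of_isotopic hCycN (hLatinL.2 0).2 hrel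
  have hx : IsUnit x := ZMod.isUnit_of_injective_add_mul fun c d hcd =>
    σC.injective (by rw [hC c, hC d]; exact hcd)
  have hrow (r : ZMod n) : N (σR r) 0 = x * L r 0 + (N (σR 0) 0 - x * L 0 0) := by
    have := hCycL.col_map_add_of_isotopic hCycN hrel r 0
    rw [add_zero, hC (L r 0 - L 0 0)] at this
    linear_combination -this
  refine ⟨x.val, (N (σR 0) 0 - x * L 0 0).val, x.val_lt, ZMod.val_lt _,
    (ZMod.isUnit_iff_coprime _ _).1 (by rwa [ZMod.natCast_zmod_val]), fun r c => ?_⟩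
  rw [ZMod.natCast_zmod_val, ZMod.natCast_zmod_val, hCycN.apply_eq_add, hCycL.apply_eq_add,
    hrow r]
  ring

/-- Lemma 5 (forward direction): if two cyclic Latin squares are related by an isotopism
`(σ_R, σ_C, σ_E)`, then they are related by one of the form `(σ_R, m_x, m_x·τ^{j'})`
with `gcd(x,n) = 1`. -/
theorem isotopism_of_cyclic_reduces (n : ℕ) (hn : 0 < n)
    (L N : ZMod n → ZMod n → ZMod n)
    (hLatinL : IsLatinSq n L) (hCycL : IsCyclicSq n L)
    (hLatinN : IsLatinSq n N) (hCycN : IsCyclicSq n N)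
    (σR σC σE : Equiv.Perm (ZMod n))
    (hrel : ∀ r c : ZMod n, N (σR r) (σC c) = σE (L r c)) :
    ∃ x j' : ℕ, x < n ∧ j' < n ∧ Nat.Coprime x n ∧
      ∀ r c : ZMod n, N (σR r) ((x : ZMod n) * c) = (x : ZMod n) * L r c + (j' : ZMod n) :=
  isotopism_of_cyclic_reduces_general n hn L N hLatinL hCycL hCycN σR σC σE hrel
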